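/- arXiv:2006.13708 — 2 statements merged into one kernel-verified Lean document; each statement's English description precedes it below -/
import Mathlib

section
/- Under the hypotheses of the (2rC_φ)-Lipschitz property of the invariant layer f_φ, let τ: ℝ^d → ℝ^d and ξ: ℝ^r → ℝ^r be Lipschitz maps. Then for every probability measure α supported on a compact set Ω ⊂ ℝ^d: W̄₁(ξ♯ f_φ(τ♯α), f_φ(α)) ≤ sup_{y ∈ f_φ(τ(Ω))} ‖ξ(y) − y‖₂ + 2r·Lip(φ)·sup_{x ∈ Ω} ‖τ(x) − x‖₂. -/
open MeasureTheory NNReal ENNReal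

noncomputable def W1 {E : Type*} [MeasurableSpace E] [PseudoMetricSpace E]
    (α β : Measure E) : ℝ :=
  ⨅ π : {π : Measure (E × E) // π.map Prod.fst = α ∧ π.map Prod.snd = β},
    ∫ p, dist p.1 p.2 ∂(π : Measure (E × E))

noncomputable def permMap {d : ℕ} (σ : Equiv.Perm (Fin d)) :
    EuclideanSpace ℝ (Fin d) → EuclideanSpace ℝ (Fin d) :=
  fun x => (WithLp.toLp 2 (fun i => x (σ i)) : EuclideanSpace ℝ (Fin d))

noncomputable def W1bar {d : ℕ} (G : Subgroup (Equiv.Perm (Fin d)))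
    (α β : Measure (EuclideanSpace ℝ (Fin d))) : ℝ :=
  ⨅ σ : G, W1 (α.map (permMap (σ : Equiv.Perm (Fin d)))) β

/-- The invariant layer: pushforward of α by x ↦ ∫ φ(x,x') dα(x'). -/
noncomputable def invLayer {d r : ℕ}
    (φ : EuclideanSpace ℝ (Fin d) → EuclideanSpace ℝ (Fin d) → EuclideanSpace ℝ (Fin r))
    (α : Measure (EuclideanSpace ℝ (Fin d))) : Measure (EuclideanSpace ℝ (Fin r)) :=
  α.map (fun x => ∫ x', φ x x' ∂α)

/-!
Couple ξ♯f_φ(τ♯α) with f_φ(α) through α itself, pairing ξ(g(τx)) with h(x), where g and h are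
the mean-field maps y ↦ ∫ φ(y,·) d(τ♯α) and x ↦ ∫ φ(x,·) dα. Then ξ moves g(τx) by at most the
first supremum, while g(τx) − h(x) = ∫ (φ(τx,τx') − φ(x,x')) dα(x') has norm at most
2 Lip(φ) sup_Ω ‖τ − id‖ because φ is Lipschitz in each variable separately; this is within the
stated 2r Lip(φ) sup_Ω ‖τ − id‖, as for r = 0 the output space is a point. No group element is
needed: the group on the output side is trivial, so W̄₁ is just W₁.
-/

theorem le_cbiSup {ι α : Type*} [ConditionallyCompleteLattice α] {s : Set ι} {f : ι → α}
    (hf : BddAbove (f '' s)) {i : ι} (hi : i ∈ s) : f i ≤ ⨆ i ∈ s, f i :=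
  le_ciSup₂ (f := fun i (_ : i ∈ s) => f i)
    (hf.mono <| Set.iUnion_subset fun _ => by rintro _ ⟨hi, rfl⟩; exact ⟨_, hi, rfl⟩) i hi

theorem dist_le_card_mul_of_dist_le {ι : Type*} [Fintype ι] {y z : EuclideanSpace ℝ ι} {c : ℝ}
    (h : dist y z ≤ c) : dist y z ≤ Fintype.card ι * c := by
  rcases isEmpty_or_nonempty ι with hι | hι
  · simp [Subsingleton.elim y z]
  · have : (1 : ℝ) ≤ Fintype.card ι := by exact_mod_cast Fintype.card_pos
    nlinarith [dist_nonneg.trans h]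

theorem dist_le_of_lipschitzWith_left_right {X Y Z : Type*} [PseudoMetricSpace X]
    [PseudoMetricSpace Y] [PseudoMetricSpace Z] {K : ℝ≥0} {φ : X → Y → Z}
    (hφ₁ : ∀ x, LipschitzWith K (φ x)) (hφ₂ : ∀ y, LipschitzWith K (φ · y)) (x x' : X) (y y' : Y) :
    dist (φ x y) (φ x' y') ≤ K * dist x x' + K * dist y y' :=
  calc dist (φ x y) (φ x' y') ≤ dist (φ x y) (φ x y') + dist (φ x y') (φ x' y') :=
        dist_triangle _ _ _
    _ ≤ K * dist y y' + K * dist x x' :=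
        add_le_add ((hφ₁ x).dist_le_mul y y') ((hφ₂ y').dist_le_mul x x')
    _ = K * dist x x' + K * dist y y' := add_comm _ _

section Integral

variable {X E : Type*} [MeasurableSpace X] [NormedAddCommGroup E] {μ : Measure X}

theorem Continuous.integrable_of_ae_mem_isCompact [TopologicalSpace X] [T2Space X]
    [OpensMeasurableSpace X] [IsFiniteMeasure μ] {f : X → E} (hf : Continuous f) {K : Set X}
    (hK : IsCompact K) (hμK : ∀ᵐ x ∂μ, x ∈ K) : Integrable f μ := by
  rw [← Measure.restrict_eq_self_of_ae_mem hμK]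
  exact hf.continuousOn.integrableOn_compact hK

variable [NormedSpace ℝ E] [IsProbabilityMeasure μ]

theorem dist_integral_le_of_ae_dist_le {f g : X → E} (hf : Integrable f μ) (hg : Integrable g μ)
    {C : ℝ} (h : ∀ᵐ x ∂μ, dist (f x) (g x) ≤ C) : dist (∫ x, f x ∂μ) (∫ x, g x ∂μ) ≤ C := by
  rw [dist_eq_norm, ← integral_sub hf hg]
  simpa using norm_integral_le_of_norm_le_const (μ := μ) (h.mono fun x hx => by rwa [← dist_eq_norm])

theorem lipschitzWith_integral {Y : Type*} [PseudoMetricSpace Y] {K : ℝ≥0} {φ : Y → X → E}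
    (hφ : ∀ x, LipschitzWith K (φ · x)) (hint : ∀ y, Integrable (φ y) μ) :
    LipschitzWith K (fun y => ∫ x, φ y x ∂μ) :=
  LipschitzWith.of_dist_le_mul fun y y' =>
    dist_integral_le_of_ae_dist_le (hint y) (hint y') (ae_of_all _ fun x => (hφ x).dist_le_mul y y')

theorem dist_integral_map_le [PseudoMetricSpace X] {K : ℝ≥0} {φ : X → X → E}
    (hφ₁ : ∀ x, LipschitzWith K (φ x)) (hφ₂ : ∀ x, LipschitzWith K (φ · x)) {τ : X → X}
    (hτ : AEMeasurable τ μ) (hint : ∀ x, Integrable (φ x) μ)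
    (hint_map : ∀ x, Integrable (φ x) (μ.map τ)) {S : ℝ} (hS : ∀ᵐ y ∂μ, dist (τ y) y ≤ S) {x : X}
    (hx : dist (τ x) x ≤ S) :
    dist (∫ y, φ (τ x) y ∂μ.map τ) (∫ y, φ x y ∂μ) ≤ 2 * K * S := by
  have hint_comp : Integrable (fun y => φ (τ x) (τ y)) μ :=
    (integrable_map_measure (hint_map _).aestronglyMeasurable hτ).1 (hint_map _)
  rw [integral_map hτ (hint_map _).aestronglyMeasurable]
  refine dist_integral_le_of_ae_dist_le hint_comp (hint x) (hS.mono fun y hy => ?_)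
  calc dist (φ (τ x) (τ y)) (φ x y) ≤ K * dist (τ x) x + K * dist (τ y) y :=
        dist_le_of_lipschitzWith_left_right hφ₁ hφ₂ _ _ _ _
    _ ≤ K * S + K * S := by gcongr
    _ = 2 * K * S := by ring

end Integral

section Wasserstein

variable {E : Type*} [MeasurableSpace E] [PseudoMetricSpace E]

theorem W1_le_integral_dist {μ ν : Measure E} (π : Measure (E × E)) (hπ₁ : π.map Prod.fst = μ)
    (hπ₂ : π.map Prod.snd = ν) : W1 μ ν ≤ ∫ p, dist p.1 p.2 ∂π := by
  refine ciInf_le ⟨0, ?_⟩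
    (⟨π, hπ₁, hπ₂⟩ : {π : Measure (E × E) // π.map Prod.fst = μ ∧ π.map Prod.snd = ν})
  rintro _ ⟨π', rfl⟩
  exact integral_nonneg fun _ => dist_nonneg

theorem W1_map_le_integral_dist [BorelSpace E] [SecondCountableTopology E] {X : Type*}
    [MeasurableSpace X] (μ : Measure X) {f g : X → E} (hf : Measurable f) (hg : Measurable g) :
    W1 (μ.map f) (μ.map g) ≤ ∫ x, dist (f x) (g x) ∂μ := by
  have hfg : Measurable fun x => (f x, g x) := hf.prodMk hg
  calc W1 (μ.map f) (μ.map g) ≤ ∫ p, dist p.1 p.2 ∂μ.map fun x => (f x, g x) :=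
        W1_le_integral_dist _ (by rw [Measure.map_map measurable_fst hfg]; rfl)
          (by rw [Measure.map_map measurable_snd hfg]; rfl)
    _ = ∫ x, dist (f x) (g x) ∂μ :=
        integral_map hfg.aemeasurable continuous_dist.aestronglyMeasurable

theorem W1_map_le_of_ae_dist_le [BorelSpace E] [SecondCountableTopology E] {X : Type*}
    [MeasurableSpace X] {μ : Measure X} [IsProbabilityMeasure μ] {f g : X → E}
    (hf : Measurable f) (hg : Measurable g) {C : ℝ} (h : ∀ᵐ x ∂μ, dist (f x) (g x) ≤ C) :
    W1 (μ.map f) (μ.map g) ≤ C :=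
  (W1_map_le_integral_dist μ hf hg).trans <| by
    simpa using integral_mono_of_nonneg (ae_of_all _ fun _ => dist_nonneg) (integrable_const C) h

end Wasserstein

theorem W1bar_bot {d : ℕ} (μ ν : Measure (EuclideanSpace ℝ (Fin d))) :
    W1bar ⊥ μ ν = W1 μ ν := by
  rw [W1bar, ciInf_unique]
  exact congrArg (W1 · ν) Measure.map_id

theorem invariant_layer_perturbation_general {d r : ℕ}
    (Cφ Cτ Cξ : ℝ≥0)
    (φ : EuclideanSpace ℝ (Fin d) → EuclideanSpace ℝ (Fin d) → EuclideanSpace ℝ (Fin r))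
    (hLip1 : ∀ z, LipschitzWith Cφ (φ z))
    (hLip2 : ∀ z, LipschitzWith Cφ (fun w => φ w z))
    (τ : EuclideanSpace ℝ (Fin d) → EuclideanSpace ℝ (Fin d))
    (ξ : EuclideanSpace ℝ (Fin r) → EuclideanSpace ℝ (Fin r))
    (hτ : LipschitzWith Cτ τ) (hξ : LipschitzWith Cξ ξ)
    (Ω : Set (EuclideanSpace ℝ (Fin d))) (hΩ : IsCompact Ω)
    (α : Measure (EuclideanSpace ℝ (Fin d))) [IsProbabilityMeasure α] (hαΩ : α Ωᶜ = 0) :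
    W1bar (⊥ : Subgroup (Equiv.Perm (Fin r))) ((invLayer φ (α.map τ)).map ξ) (invLayer φ α)
      ≤ (⨆ y ∈ (fun x => ∫ x', φ x x' ∂(α.map τ)) '' (τ '' Ω), ‖ξ y - y‖)
        + 2 * r * Cφ * ⨆ x ∈ Ω, ‖τ x - x‖ := by
  have hΩ_ae : ∀ᵐ x ∂α, x ∈ Ω := ae_iff.2 hαΩ
  have := Measure.isProbabilityMeasure_map (μ := α) hτ.continuous.aemeasurable
  have hτΩ : IsCompact (τ '' Ω) := hΩ.image hτ.continuous
  have hτΩ_ae : ∀ᵐ y ∂α.map τ, y ∈ τ '' Ω :=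
    (ae_map_iff hτ.continuous.aemeasurable hτΩ.isClosed.measurableSet).2
      (hΩ_ae.mono fun x => Set.mem_image_of_mem τ)
  have hint : ∀ z, Integrable (φ z) α := fun z =>
    (hLip1 z).continuous.integrable_of_ae_mem_isCompact hΩ hΩ_ae
  have hint_map : ∀ z, Integrable (φ z) (α.map τ) := fun z =>
    (hLip1 z).continuous.integrable_of_ae_mem_isCompact hτΩ hτΩ_ae
  set g := fun y => ∫ y', φ y y' ∂α.map τ
  set h := fun x => ∫ x', φ x x' ∂α
  have hg : LipschitzWith Cφ g := lipschitzWith_integral hLip2 hint_map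
  have hh : LipschitzWith Cφ h := lipschitzWith_integral hLip2 hint
  set A := ⨆ y ∈ g '' (τ '' Ω), ‖ξ y - y‖
  set S := ⨆ x ∈ Ω, ‖τ x - x‖
  have hξ_le : ∀ x ∈ Ω, dist (ξ (g (τ x))) (g (τ x)) ≤ A := fun x hx =>
    (dist_eq_norm _ _).trans_le <| le_cbiSup
      ((hτΩ.image hg.continuous).image (hξ.continuous.sub continuous_id).norm).bddAbove
      (Set.mem_image_of_mem g (Set.mem_image_of_mem τ hx))
  have hτ_le : ∀ x ∈ Ω, dist (τ x) x ≤ S := fun x hx =>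
    (dist_eq_norm _ _).trans_le <|
      le_cbiSup (hΩ.image (hτ.continuous.sub continuous_id).norm).bddAbove hx
  have hg_le : ∀ x ∈ Ω, dist (g (τ x)) (h x) ≤ r * (2 * Cφ * S) := fun x hx => by
    simpa using dist_le_card_mul_of_dist_le <| dist_integral_map_le hLip1 hLip2
      hτ.continuous.aemeasurable hint hint_map (hΩ_ae.mono hτ_le) (hτ_le x hx)
  have hgτ : Measurable (g ∘ τ) := hg.continuous.measurable.comp hτ.continuous.measurable
  calc W1bar ⊥ ((invLayer φ (α.map τ)).map ξ) (invLayer φ α)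
      = W1 (α.map (ξ ∘ g ∘ τ)) (α.map h) := by
        rw [W1bar_bot, invLayer, invLayer, Measure.map_map hg.continuous.measurable
          hτ.continuous.measurable, Measure.map_map hξ.continuous.measurable hgτ]
    _ ≤ A + 2 * r * Cφ * S :=
        W1_map_le_of_ae_dist_le (hξ.continuous.measurable.comp hgτ) hh.continuous.measurable <|
          hΩ_ae.mono fun x hx => (dist_triangle (ξ (g (τ x))) (g (τ x)) (h x)).trans <| by
            linarith [hξ_le x hx, hg_le x hx]

/-- stability of the invariant layer under perturbations τ of the input
space and ξ of the output space:
W̄₁(ξ♯ f_φ(τ♯α), f_φ(α)) ≤ sup_{y ∈ f_φ(τ(Ω))} ‖ξ(y)−y‖ + 2r Lip(φ) sup_{x∈Ω} ‖τ(x)−x‖. -/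
theorem invariant_layer_perturbation {d r : ℕ} (G : Subgroup (Equiv.Perm (Fin d)))
    (Cφ Cτ Cξ : ℝ≥0)
    (φ : EuclideanSpace ℝ (Fin d) → EuclideanSpace ℝ (Fin d) → EuclideanSpace ℝ (Fin r))
    (hLip1 : ∀ z, LipschitzWith Cφ (φ z))
    (hLip2 : ∀ z, LipschitzWith Cφ (fun w => φ w z))
    (hinv : ∀ σ ∈ G, ∀ z₁ z₂, φ (permMap σ z₁) (permMap σ z₂) = φ z₁ z₂)
    (τ : EuclideanSpace ℝ (Fin d) → EuclideanSpace ℝ (Fin d))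
    (ξ : EuclideanSpace ℝ (Fin r) → EuclideanSpace ℝ (Fin r))
    (hτ : LipschitzWith Cτ τ) (hξ : LipschitzWith Cξ ξ)
    (Ω : Set (EuclideanSpace ℝ (Fin d))) (hΩ : IsCompact Ω)
    (α : Measure (EuclideanSpace ℝ (Fin d))) [IsProbabilityMeasure α] (hαΩ : α Ωᶜ = 0) :
    W1bar (⊥ : Subgroup (Equiv.Perm (Fin r))) ((invLayer φ (α.map τ)).map ξ) (invLayer φ α)
      ≤ (⨆ y ∈ (fun x => ∫ x', φ x x' ∂(α.map τ)) '' (τ '' Ω), ‖ξ y - y‖)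
        + 2 * r * Cφ * ⨆ x ∈ Ω, ‖τ x - x‖ :=
  invariant_layer_perturbation_general Cφ Cτ Cξ φ hLip1 hLip2 τ ξ hτ hξ Ω hΩ α hαΩ
end

section
/- The map sending the coefficients of a monic complex polynomial of degree d to its multiset of roots is 1/d-Hölder: there exists a constant C (depending on d and on a compact bound on the coefficients) such that for any two monic polynomials p, q of degree d with coefficients in a fixed compact set, the roots of p and q can be matched by a bijection so that each pair of matched roots differs by at most C·(max coefficient difference)^{1/d}. -/
/-!
Enumerate the roots of `p` and `q` as `x` and `y`. On a disc containing all roots (Cauchy's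
bound `R + 1`), `|p - q| ≤ δ ^ d / 16` with `δ ≍ ε ^ (1 / d)`. Among the at most `(2d)²`
mutual distances of the roots, pigeonhole finds a scale `t ∈ [δ, 5 ^ (4d²) δ]` such that no
distance lies in `[t, 5t)`; then "closer than `t`" is an equivalence relation on the roots. Around a
cluster with centre `c`, the circle average of `log |z - a|` over `|z - c| = ρ` is
`max (log ρ) (log |a - c|)` (Jensen), so the number of roots in the cluster is the increase of
the circle average of `log |p|` from radius `2t` to `4t`, divided by `log 2`; the same holds for
`q`. On these circles every factor `|z - a|` is at least `t`, so `|p - q| ≤ |q| / 16` and the two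
increases differ by at most `1 / 8 < log 2`: the clusters contain equally many roots of `p` and
of `q`, and matching them cluster by cluster moves no root by more than `t`. When `δ` is large
the bound is trivial.
-/

open Polynomial Finset Real Metric

section

variable {ι : Type*} [Fintype ι]

theorem exists_gap_scale (S : Finset ℝ) {δ b : ℝ} (hδ : 0 ≤ δ) (hb : 1 ≤ b) :
    ∃ t, δ ≤ t ∧ t ≤ δ * b ^ #S ∧ ∀ s ∈ S, s < t ∨ b * t ≤ s := by
  induction S using Finset.strongInduction generalizing δ with
  | H S ih =>
    by_cases hfree : ∀ s ∈ S, s < δ ∨ b * δ ≤ s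
    · exact ⟨δ, le_rfl, le_mul_of_one_le_right hδ (one_le_pow₀ hb), hfree⟩
    push Not at hfree
    obtain ⟨s₀, hs₀, hδs₀, hs₀b⟩ := hfree
    have hsub : S.filter (b * δ ≤ ·) ⊂ S :=
      filter_ssubset.mpr ⟨s₀, hs₀, not_le.mpr hs₀b⟩
    obtain ⟨t, ht₁, ht₂, hgap⟩ := ih _ hsub (δ := b * δ) (mul_nonneg (by linarith) hδ)
    refine ⟨t, le_trans (le_mul_of_one_le_left hδ hb) ht₁, ?_, fun s hs => ?_⟩
    · calc t ≤ b * δ * b ^ #(S.filter (b * δ ≤ ·)) := ht₂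
        _ = δ * b ^ (#(S.filter (b * δ ≤ ·)) + 1) := by ring
        _ ≤ δ * b ^ #S := by gcongr; exact card_lt_card hsub
    · by_cases hbs : b * δ ≤ s
      · exact hgap s (mem_filter.mpr ⟨hs, hbs⟩)
      · exact Or.inl (lt_of_lt_of_le (not_le.mp hbs) ht₁)

theorem circleAverage_log_norm_sub_const_sub_eq {a c : ℂ} {r R : ℝ} (hr : 0 < r) (hrR : r ≤ R)
    (ha : dist a c ≤ r ∨ R ≤ dist a c) :
    circleAverage (log ‖· - a‖) c R - circleAverage (log ‖· - a‖) c r =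
      if dist a c ≤ r then log (R / r) else 0 := by
  have hR : 0 < R := hr.trans_le hrR
  rw [circleAverage_log_norm_sub_const_eq_log_radius_add_posLog hR.ne',
    circleAverage_log_norm_sub_const_eq_log_radius_add_posLog hr.ne', ← dist_eq_norm,
    dist_comm c a]
  split_ifs with hin
  · have hposLog : ∀ ρ, r ≤ ρ → log⁺ (ρ⁻¹ * dist a c) = 0 := fun ρ hρ => by
      rw [posLog_eq_zero_iff, abs_of_nonneg (mul_nonneg (inv_nonneg.mpr (hr.le.trans hρ))
        dist_nonneg)]
      exact inv_mul_le_one_of_le₀ (hin.trans hρ) (hr.le.trans hρ)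
    rw [hposLog R hrR, hposLog r le_rfl, log_div hR.ne' hr.ne']
    ring
  · have hout : R ≤ dist a c := ha.resolve_left hin
    have hlog : ∀ ρ, 0 < ρ → ρ ≤ dist a c →
        log ρ + log⁺ (ρ⁻¹ * dist a c) = log (dist a c) := fun ρ hρ hρa => by
        rw [posLog_eq_log (by rw [abs_of_nonneg (by positivity)]; exact
          (one_le_inv_mul₀ hρ).mpr hρa), log_mul (inv_ne_zero hρ.ne') (by linarith), log_inv]
        ring
    rw [hlog R hR hout, hlog r hr (hrR.trans hout), sub_self]

theorem circleAverage_sum_log_norm_sub_sub_eq {x : ι → ℂ} {c : ℂ} {r R : ℝ} (hr : 0 < r)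
    (hrR : r ≤ R) (hx : ∀ i, dist (x i) c ≤ r ∨ R ≤ dist (x i) c) :
    circleAverage (fun z => ∑ i, log ‖z - x i‖) c R -
        circleAverage (fun z => ∑ i, log ‖z - x i‖) c r =
      #{i | dist (x i) c ≤ r} * log (R / r) := by
  rw [circleAverage_fun_sum fun i _ => circleIntegrable_log_norm_sub_const R,
    circleAverage_fun_sum fun i _ => circleIntegrable_log_norm_sub_const r, ← sum_sub_distrib]
  simp only [circleAverage_log_norm_sub_const_sub_eq hr hrR (hx _)]
  rw [sum_ite, sum_const_zero, add_zero, sum_const, nsmul_eq_mul]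

theorem abs_circleAverage_le {f : ℂ → ℝ} {c : ℂ} {R κ : ℝ} (hf : CircleIntegrable f c R)
    (hfκ : ∀ z ∈ sphere c |R|, |f z| ≤ κ) : |circleAverage f c R| ≤ κ :=
  (abs_circleAverage_le_circleAverage_abs).trans
    (circleAverage_mono_on_of_le_circle hf.abs hfκ)

theorem card_dist_le_eq_of_abs_sum_log_norm_sub_le {x y : ι → ℂ} {c : ℂ} {r R κ : ℝ}
    (hr : 0 < r) (hrR : r ≤ R)
    (hx : ∀ i, dist (x i) c ≤ r ∨ R ≤ dist (x i) c)
    (hy : ∀ i, dist (y i) c ≤ r ∨ R ≤ dist (y i) c)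
    (hlog : ∀ ρ ∈ ({r, R} : Set ℝ), ∀ z ∈ sphere c ρ,
      |∑ i, log ‖z - x i‖ - ∑ i, log ‖z - y i‖| ≤ κ)
    (hκ : 2 * κ < log (R / r)) :
    #{i | dist (x i) c ≤ r} = #{i | dist (y i) c ≤ r} := by
  have hint : ∀ (w : ι → ℂ) ρ, CircleIntegrable (fun z => ∑ i, log ‖z - w i‖) c ρ :=
    fun w ρ => CircleIntegrable.fun_sum univ fun i _ => circleIntegrable_log_norm_sub_const ρ
  set a := #{i | dist (x i) c ≤ r}
  set b := #{i | dist (y i) c ≤ r}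
  set A := fun (w : ι → ℂ) ρ => circleAverage (fun z => ∑ i, log ‖z - w i‖) c ρ
  have havg : ∀ ρ ∈ ({r, R} : Set ℝ), |A x ρ - A y ρ| ≤ κ := fun ρ hρ => by
    have hρpos : 0 < ρ := by rcases hρ with rfl | rfl <;> linarith
    rw [← circleAverage_fun_sub (hint x ρ) (hint y ρ)]
    exact abs_circleAverage_le ((hint x ρ).sub (hint y ρ))
      (fun z hz => hlog ρ hρ z (by rwa [abs_of_pos hρpos] at hz))
  have hdiff : ((a : ℝ) - b) * log (R / r) = (A x R - A y R) - (A x r - A y r) := by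
    rw [sub_mul, ← circleAverage_sum_log_norm_sub_sub_eq hr hrR hx,
      ← circleAverage_sum_log_norm_sub_sub_eq hr hrR hy]
    ring
  have hL : 0 < log (R / r) := by linarith [(abs_nonneg _).trans (havg r (by simp))]
  have hab : |(a : ℝ) - b| * log (R / r) < 1 * log (R / r) := by
    rw [← abs_of_pos hL, ← abs_mul, hdiff, abs_of_pos hL]
    linarith [abs_sub (A x R - A y R) (A x r - A y r), havg R (by simp), havg r (by simp)]
  obtain ⟨hab₁, hab₂⟩ := abs_sub_lt_iff.mp (lt_of_mul_lt_mul_right hab hL.le)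
  have : a < b + 1 := by exact_mod_cast (by linarith : (a : ℝ) < b + 1)
  have : b < a + 1 := by exact_mod_cast (by linarith : (b : ℝ) < a + 1)
  omega

theorem exists_equiv_dist_lt_of_card_eq {α : Type*} [PseudoMetricSpace α] {x y : ι → α}
    {t : ℝ} (ht : 0 < t)
    (hgap : ∀ k l, dist (Sum.elim x y k) (Sum.elim x y l) < t ∨
      2 * t ≤ dist (Sum.elim x y k) (Sum.elim x y l))
    (hcard : ∀ k,
      #{i | dist (x i) (Sum.elim x y k) < t} = #{i | dist (y i) (Sum.elim x y k) < t}) :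
    ∃ σ : ι ≃ ι, ∀ i, dist (x (σ i)) (y i) < t := by
  classical
  set w := Sum.elim x y
  let cluster : Setoid (ι ⊕ ι) :=
    { r := fun k l => dist (w k) (w l) < t
      iseqv :=
        { refl := fun k => by simpa using ht
          symm := fun h => by rwa [dist_comm]
          trans := fun {k l m} hkl hlm => (hgap k m).resolve_right fun h =>
            by linarith [dist_triangle (w k) (w l) (w m)] } }
  have hfiber : ∀ q : Quotient cluster, Fintype.card {i // Quotient.mk _ (Sum.inr i) = q} =
      Fintype.card {i // Quotient.mk _ (Sum.inl i) = q} := by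
    intro q
    refine Quotient.inductionOn q fun k => ?_
    simp only [Quotient.eq, Fintype.card_subtype]
    exact (hcard k).symm
  let e := fun q => Fintype.equivOfCardEq (hfiber q)
  exact ⟨Equiv.ofFiberEquiv e, fun i => Quotient.exact (Equiv.ofFiberEquiv_map e i)⟩

theorem abs_log_sub_log_le {a b m η : ℝ} (hm : 0 < m) (ha : m ≤ a) (hb : m ≤ b)
    (hab : |a - b| ≤ η) : |log a - log b| ≤ η / m := by
  have key : ∀ a b, m ≤ a → m ≤ b → |a - b| ≤ η → log a - log b ≤ η / m := by
    intro a b ha hb hab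
    have hb₀ : 0 < b := hm.trans_le hb
    calc log a - log b = log (a / b) := (log_div (hm.trans_le ha).ne' hb₀.ne').symm
      _ ≤ a / b - 1 := log_le_sub_one_of_pos (div_pos (hm.trans_le ha) hb₀)
      _ = (a - b) / b := by field_simp
      _ ≤ η / m := div_le_div₀ ((abs_nonneg _).trans hab) ((le_abs_self _).trans hab) hm hb
  exact abs_sub_le_iff.mpr ⟨key a b ha hb hab, key b a hb ha (by rwa [abs_sub_comm])⟩

theorem abs_sum_log_norm_sub_sub_le {x y : ι → ℂ} {z : ℂ} {m η : ℝ}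
    (hm : 0 < m) (hx : ∀ i, m ≤ ‖z - x i‖) (hy : ∀ i, m ≤ ‖z - y i‖)
    (hxy : ‖∏ i, (z - x i) - ∏ i, (z - y i)‖ ≤ η) :
    |∑ i, log ‖z - x i‖ - ∑ i, log ‖z - y i‖| ≤ η / m ^ Fintype.card ι := by
  have hsum : ∀ w : ι → ℂ, (∀ i, m ≤ ‖z - w i‖) →
      ∑ i, log ‖z - w i‖ = log ‖∏ i, (z - w i)‖ ∧
        m ^ Fintype.card ι ≤ ‖∏ i, (z - w i)‖ :=
    fun w hw => by
      rw [norm_prod, log_prod fun i _ => (hm.trans_le (hw i)).ne']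
      refine ⟨rfl, ?_⟩
      calc m ^ Fintype.card ι = ∏ _i : ι, m := by rw [prod_const, card_univ]
        _ ≤ ∏ i, ‖z - w i‖ := prod_le_prod (fun _ _ => hm.le) fun i _ => hw i
  obtain ⟨hxlog, hxm⟩ := hsum x hx
  obtain ⟨hylog, hym⟩ := hsum y hy
  rw [hxlog, hylog]
  exact abs_log_sub_log_le (by positivity) hxm hym ((abs_norm_sub_norm_le _ _).trans hxy)

theorem exists_equiv_dist_lt_of_gap {x y : ι → ℂ} {t : ℝ} (ht : 0 < t)
    (hgap : ∀ k l, dist (Sum.elim x y k) (Sum.elim x y l) < t ∨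
      5 * t ≤ dist (Sum.elim x y k) (Sum.elim x y l))
    (hclose : ∀ k z, dist z (Sum.elim x y k) ≤ 4 * t →
      ‖∏ i, (z - x i) - ∏ i, (z - y i)‖ ≤ t ^ Fintype.card ι / 16) :
    ∃ σ : ι ≃ ι, ∀ i, dist (x (σ i)) (y i) < t := by
  refine exists_equiv_dist_lt_of_card_eq ht
    (fun k l => (hgap k l).imp_right fun h => by linarith) fun k => ?_
  set c := Sum.elim x y k
  have hsep : ∀ w : ι → ℂ, (∀ i, dist (w i) c < t ∨ 5 * t ≤ dist (w i) c) →
      (∀ i, dist (w i) c ≤ 2 * t ∨ 4 * t ≤ dist (w i) c) ∧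
      (∀ z, 2 * t ≤ dist z c → dist z c ≤ 4 * t → ∀ i, t ≤ ‖z - w i‖) ∧
      #{i | dist (w i) c < t} = #{i | dist (w i) c ≤ 2 * t} := fun w hw => by
    refine ⟨fun i => (hw i).imp (fun h => by linarith) (fun h => by linarith),
      fun z hz₁ hz₂ i => ?_, congr_arg card (filter_congr fun i _ => ?_)⟩
    · rw [← dist_eq_norm]
      rcases hw i with h | h
      · linarith [dist_triangle z (w i) c]
      · linarith [dist_triangle (w i) z c, dist_comm z (w i)]
    · rcases hw i with h | h
      · exact ⟨fun _ => by linarith, fun _ => h⟩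
      · exact ⟨fun h' => by linarith, fun h' => by linarith⟩
  obtain ⟨hx, hxfar, hxcard⟩ := hsep x fun i => hgap (Sum.inl i) k
  obtain ⟨hy, hyfar, hycard⟩ := hsep y fun i => hgap (Sum.inr i) k
  rw [hxcard, hycard]
  refine card_dist_le_eq_of_abs_sum_log_norm_sub_le (κ := 1 / 16) (by positivity)
    (by linarith) hx hy (fun ρ hρ z hz => ?_) ?_
  · have hρ : 2 * t ≤ dist z c ∧ dist z c ≤ 4 * t := by
      rw [mem_sphere.mp hz]; rcases hρ with rfl | rfl <;> constructor <;> linarith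
    have := abs_sum_log_norm_sub_sub_le ht (hxfar z hρ.1 hρ.2) (hyfar z hρ.1 hρ.2)
      (hclose k z hρ.2)
    rwa [div_div_cancel_left' (by positivity), ← one_div] at this
  · rw [show 4 * t / (2 * t) = 2 by field_simp; norm_num]
    linarith [log_two_gt_d9]

theorem exists_equiv_norm_sub_le_of_norm_prod_sub_le {x y : ι → ℂ} {B δ : ℝ} (hδ : 0 < δ)
    (hx : ∀ i, ‖x i‖ ≤ B) (hy : ∀ i, ‖y i‖ ≤ B)
    (hclose : ∀ z, ‖z‖ ≤ B + 1 →
      ‖∏ i, (z - x i) - ∏ i, (z - y i)‖ ≤ δ ^ Fintype.card ι / 16) :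
    ∃ σ : ι ≃ ι, ∀ i,
      ‖x (σ i) - y i‖ ≤ (8 * B + 1) * 5 ^ (4 * Fintype.card ι ^ 2) * δ := by
  set W : ℝ := 5 ^ (4 * Fintype.card ι ^ 2)
  have hB : ∀ i, 0 ≤ B := fun i => (norm_nonneg _).trans (hx i)
  by_cases hbig : 1 < 4 * W * δ
  · refine ⟨Equiv.refl ι, fun i => ?_⟩
    have := hB i
    calc ‖x i - y i‖ ≤ ‖x i‖ + ‖y i‖ := norm_sub_le _ _
      _ ≤ 2 * B := by linarith [hx i, hy i]
      _ ≤ (8 * B + 1) * W * δ := by nlinarith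
  set w := Sum.elim x y
  obtain ⟨t, hδt, htW, hgap⟩ := exists_gap_scale
    (univ.image fun kl : (ι ⊕ ι) × (ι ⊕ ι) => dist (w kl.1) (w kl.2)) hδ.le (b := 5)
    (by norm_num)
  replace htW : t ≤ W * δ := by
    refine htW.trans ?_
    rw [mul_comm]
    gcongr
    refine pow_le_pow_right₀ (by norm_num) (card_image_le.trans (le_of_eq ?_))
    simp only [card_univ, Fintype.card_prod, Fintype.card_sum]
    ring
  have ht : 0 < t := hδ.trans_le hδt
  obtain ⟨σ, hσ⟩ := exists_equiv_dist_lt_of_gap ht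
    (fun k l => hgap _ (mem_image_of_mem _ (mem_univ (k, l))))
    (fun k z hz => by
      have hwk : ‖w k‖ ≤ B := by cases k <;> simp [w, hx, hy]
      refine (hclose z ?_).trans (by gcongr)
      linarith [norm_le_norm_add_norm_sub' z (w k), dist_eq_norm z (w k)])
  refine ⟨σ, fun i => ?_⟩
  have := hB i
  rw [← dist_eq_norm]
  nlinarith [hσ i]

end

theorem Multiset.exists_eq_map_univ_of_card_eq {α : Type*} {n : ℕ} (s : Multiset α)
    (hs : Multiset.card s = n) : ∃ x : Fin n → α, s = (univ.val : Multiset (Fin n)).map x := by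
  obtain ⟨l, rfl⟩ : ∃ l : List α, s = l := ⟨s.toList, (Multiset.coe_toList s).symm⟩
  obtain rfl : l.length = n := by simpa using hs
  exact ⟨l.get, by rw [Fin.univ_val_map, List.ofFn_get]⟩

namespace Polynomial

theorem Monic.norm_lt_add_one_of_isRoot {K : Type*} [NormedDivisionRing K] {p : K[X]}
    {R : ℝ} {a : K} (hp : p.Monic) (hR : ∀ k, ‖p.coeff k‖ ≤ R) (ha : p.IsRoot a) :
    ‖a‖ < R + 1 := by
  have hbound := ha.norm_lt_cauchyBound hp.ne_zero
  rw [cauchyBound, hp.leadingCoeff, nnnorm_one, div_one] at hbound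
  have hR₀ : 0 ≤ R := (norm_nonneg _).trans (hR 0)
  have hsup : (range p.natDegree).sup (‖p.coeff ·‖₊) ≤ ⟨R, hR₀⟩ :=
    Finset.sup_le fun k _ => NNReal.coe_le_coe.mp (hR k)
  exact NNReal.coe_lt_coe.mpr (hbound.trans_le (add_le_add_left hsup 1))

theorem IsMonicOfDegree.exists_roots_eq_map_and_eval_eq_prod {K : Type*} [Field K]
    [IsAlgClosed K] {p : K[X]} {n : ℕ} (hp : IsMonicOfDegree p n) :
    ∃ x : Fin n → K, p.roots = (univ.val : Multiset (Fin n)).map x ∧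
      ∀ z, p.eval z = ∏ i, (z - x i) := by
  have hsplits := IsAlgClosed.splits p
  obtain ⟨x, hx⟩ := p.roots.exists_eq_map_univ_of_card_eq
    (hsplits.natDegree_eq_card_roots.symm.trans hp.natDegree_eq)
  refine ⟨x, hx, fun z => ?_⟩
  rw [hsplits.eval_eq_prod_roots_of_monic hp.monic, hx, Multiset.map_map]
  rfl

theorem IsMonicOfDegree.eq_of_forall_lt_coeff_eq {R : Type*} [Semiring R] {p q : R[X]} {n : ℕ}
    (hp : IsMonicOfDegree p n) (hq : IsMonicOfDegree q n) (h : ∀ k < n, p.coeff k = q.coeff k) :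
    p = q := by
  ext k
  rcases lt_or_ge k n with hk | hk
  exacts [h k hk, hp.coeff_eq hq hk]

theorem norm_eval_le_of_natDegree_lt {K : Type*} [NormedField K] {f : K[X]} {n : ℕ}
    {ε M : ℝ} {z : K} (hf : f.natDegree < n) (hε : ∀ k < n, ‖f.coeff k‖ ≤ ε)
    (hM : 1 ≤ M) (hz : ‖z‖ ≤ M) :
    ‖f.eval z‖ ≤ n * ε * M ^ (n - 1) := by
  rw [eval_eq_sum_range' hf]
  calc ‖∑ k ∈ range n, f.coeff k * z ^ k‖ ≤ ∑ k ∈ range n, ‖f.coeff k * z ^ k‖ :=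
        norm_sum_le _ _
    _ ≤ ∑ _k ∈ range n, ε * M ^ (n - 1) := sum_le_sum fun k hk => by
        have hk := mem_range.mp hk
        rw [norm_mul, norm_pow]
        gcongr
        · exact (norm_nonneg _).trans (hε k hk)
        · exact hε k hk
        · exact (pow_le_pow_left₀ (norm_nonneg z) hz k).trans (pow_le_pow_right₀ hM (by omega))
    _ = n * ε * M ^ (n - 1) := by rw [sum_const, card_range, nsmul_eq_mul, mul_assoc]

end Polynomial

/-- continuity of roots, 1/d-Hölder version. For monic complex polynomials
of degree d with coefficients in a fixed compact (norm ≤ R), the multisets of roots of p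
and q can be matched so that matched roots differ by at most
C · (max coefficient difference)^(1/d). -/
theorem roots_holder_in_coefficients (d : ℕ) (hd : 0 < d) (R : ℝ) :
    ∃ C > 0, ∀ p q : Polynomial ℂ,
      p.Monic → q.Monic → p.natDegree = d → q.natDegree = d →
      (∀ k, ‖p.coeff k‖ ≤ R) → (∀ k, ‖q.coeff k‖ ≤ R) →
      ∃ lam mu : Fin d → ℂ,
        p.roots = Multiset.map lam (Finset.univ : Finset (Fin d)).val ∧
        q.roots = Multiset.map mu (Finset.univ : Finset (Fin d)).val ∧
        ∀ i, ‖lam i - mu i‖ ≤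
          C * ((Finset.range d).sup' (Finset.nonempty_range_iff.mpr hd.ne')
                (fun k => ‖p.coeff k - q.coeff k‖)) ^ ((d : ℝ)⁻¹) := by
  set M := |R| + 2
  set K := (16 * d * M ^ (d - 1)) ^ (d : ℝ)⁻¹
  refine ⟨(8 * (|R| + 1) + 1) * 5 ^ (4 * d ^ 2) * K, by positivity, ?_⟩
  intro p q hp hq hpd hqd hpR hqR
  have hpd' : IsMonicOfDegree p d := ⟨hpd, hp⟩
  have hqd' : IsMonicOfDegree q d := ⟨hqd, hq⟩
  set ε := (range d).sup' (nonempty_range_iff.mpr hd.ne') fun k => ‖p.coeff k - q.coeff k‖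
  have hε : ∀ k < d, ‖(p - q).coeff k‖ ≤ ε := fun k hk => by
    rw [coeff_sub]; exact le_sup' (fun k => ‖p.coeff k - q.coeff k‖) (mem_range.mpr hk)
  obtain ⟨x, hpx, hpeval⟩ := hpd'.exists_roots_eq_map_and_eval_eq_prod
  obtain ⟨y, hqy, hqeval⟩ := hqd'.exists_roots_eq_map_and_eval_eq_prod
  rcases ((norm_nonneg _).trans (hε 0 hd)).eq_or_lt with hε₀ | hε₀
  · have hpq : p = q := hpd'.eq_of_forall_lt_coeff_eq hqd' fun k hk =>
      sub_eq_zero.mp (norm_le_zero_iff.mp (by simpa [← hε₀] using hε k hk))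
    refine ⟨x, x, hpx, hpq ▸ hpx, fun i => ?_⟩
    rw [sub_self, norm_zero, ← hε₀, zero_rpow (by positivity)]
    simp
  have hroots : ∀ (f : ℂ[X]) (w : Fin d → ℂ), f.Monic → (∀ k, ‖f.coeff k‖ ≤ R) →
      (∀ z, f.eval z = ∏ i, (z - w i)) → ∀ i, ‖w i‖ ≤ |R| + 1 := by
    intro f w hf hfR hfw i
    have hroot : f.IsRoot (w i) := by simp [IsRoot, hfw, prod_eq_zero (mem_univ i)]
    linarith [hf.norm_lt_add_one_of_isRoot hfR hroot, le_abs_self R]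
  obtain ⟨σ, hσ⟩ := exists_equiv_norm_sub_le_of_norm_prod_sub_le
    (δ := K * ε ^ (d : ℝ)⁻¹) (by positivity) (hroots p x hp hpR hpeval)
    (hroots q y hq hqR hqeval) fun z hz => by
      rw [← hpeval, ← hqeval, ← eval_sub, Fintype.card_fin, mul_pow,
        rpow_inv_natCast_pow (by positivity) hd.ne', rpow_inv_natCast_pow hε₀.le hd.ne']
      calc _ ≤ d * ε * M ^ (d - 1) := norm_eval_le_of_natDegree_lt
            (hpd'.natDegree_sub_lt hd.ne' hqd') hε (by linarith [abs_nonneg R]) (by linarith)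
        _ = _ := by ring
  refine ⟨x ∘ σ, y, ?_, hqy, fun i => (hσ i).trans_eq ?_⟩
  · rw [hpx, ← Multiset.map_map, Multiset.map_univ_val_equiv]
  · rw [Fintype.card_fin]
    ring
end
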